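/- The class of non-emitting Markov models is strictly more powerful than the class of interpolated Markov models: (i) for every n and every interpolated Markov model of order n over A = {0,1} there is a hierarchical non-emitting Markov model of order n assigning exactly the same probability to every string; and (ii) there exists a hierarchical non-emitting Markov model φ of order 2 over A such that for every n and every interpolated Markov model φ' of order n over A, there exists a string x^T with p_ε(x^T | φ) ≠ p_c(x^T | φ'). -/

import Mathlib

open Finset

/-- The suffix of `l` of length `min k l.length`. -/
def suff {A : Type*} (k : ℕ) (l : List A) : List A := l.drop (l.length - k)
/-- Hierarchical non-emitting Markov model of order `n` with emitting
transition probabilities `d` and non-emitting parameters `lam` (with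
`lam [] = 1`): probability of emitting the string `w` from state `x`.
From a nonempty state `x`, with probability `lam x` it emits `y` via `d x y`
and moves to the suffix of `x ++ [y]` of length `min (|x|+1) n`; with
probability `1 - lam x` it moves to the suffix `x.tail` without emitting. -/
noncomputable def pe {A : Type*} (n : ℕ) (d : List A → A → ℝ) (lam : List A → ℝ) :
    List A → List A → ℝ
  | _, [] => 1
  | [], y :: w => lam [] * d [] y * pe n d lam (suff n [y]) w
  | a :: x, y :: w =>
      lam (a :: x) * d (a :: x) y * pe n d lam (suff n ((a :: x) ++ [y])) w
      + (1 - lam (a :: x)) * pe n d lam x (y :: w)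
termination_by x w => (w.length, x.length)
/-- Next-symbol probability of an interpolated Markov model in context `c`:
a linear mixture over the suffixes of `c` of all orders `0 ≤ i ≤ |c|`. -/
noncomputable def pcSym {A : Type*} (d : List A → A → ℝ) (lamI : ℕ → List A → ℝ)
    (c : List A) (y : A) : ℝ :=
  ∑ i ∈ Finset.range (c.length + 1), lamI i c * d (suff i c) y

/-- Interpolated Markov model of order `n`: probability of emitting the string
`w` after the history `h`. -/
noncomputable def pc {A : Type*} (n : ℕ) (d : List A → A → ℝ) (lamI : ℕ → List A → ℝ) :
    List A → List A → ℝ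
  | _, [] => 1
  | h, y :: w => pcSym d lamI (suff n h) y * pc n d lamI (h ++ [y]) w
/-- Validity of an order-`n` interpolated Markov model: transition
distributions for every context of length at most `n`, and for each such
context a probability distribution of mixing parameters over the orders
`0 ≤ i ≤ |c|`. -/
def IsInterp {A : Type*} [Fintype A] (n : ℕ) (d : List A → A → ℝ)
    (lamI : ℕ → List A → ℝ) : Prop :=
  (∀ c : List A, c.length ≤ n →
    (∀ y : A, 0 ≤ d c y) ∧ (∑ y : A, d c y = 1)) ∧
  (∀ c : List A, c.length ≤ n →
    (∀ i ≤ c.length, 0 ≤ lamI i c ∧ lamI i c ≤ 1) ∧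
    ∑ i ∈ Finset.range (c.length + 1), lamI i c = 1)
/-- Validity of an order-`n` hierarchical non-emitting Markov model: emitting
distributions for every state of length at most `n`, non-emitting parameters
in `[0,1]`, and `λ₀(ε) = 1`. -/
def IsNonEmit {A : Type*} [Fintype A] (n : ℕ) (d : List A → A → ℝ)
    (lam : List A → ℝ) : Prop :=
  (∀ c : List A, c.length ≤ n →
    (∀ y : A, 0 ≤ d c y) ∧ (∑ y : A, d c y = 1)) ∧
  (∀ c : List A, c.length ≤ n → 0 ≤ lam c ∧ lam c ≤ 1) ∧
  lam [] = 1

/-!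
(i) Back-off with `λ ≡ 1` never fires, so a non-emitting model whose emitting distribution in
state `c` is the interpolated mixture `pcSym d λ c` is just the plain Markov chain of that
mixture, which is the interpolated model.

(ii) An interpolated model of order `n` emits each further `0` after `0ⁿ` with one fixed
probability, so `k ↦ p(0ᵏ)` is geometric for `k ≥ n`: `p(0ᵏ⁺¹)² = p(0ᵏ) p(0ᵏ⁺²)`. The
order-2 non-emitting witness backs off from state `0` to the empty state, which yields
`p(0ᵏ⁺¹) = ((1/2)ᵏ + (1/4)ᵏ) / 4`, a sum of two geometric sequences that satisfies this
identity for no `k`.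
-/

open List

section Suffix

variable {A : Type*}

lemma suff_length_le (k : ℕ) (l : List A) : (suff k l).length ≤ l.length := by
  simp [suff]

lemma suff_suff_append (n : ℕ) (h : List A) (y : A) :
    suff n (suff n h ++ [y]) = suff n (h ++ [y]) := by
  rcases Nat.eq_zero_or_pos n with rfl | hn
  · simp [suff]
  · unfold suff
    simp only [length_append, length_drop, length_singleton]
    rw [drop_append_of_le_length (by simp; omega), drop_append_of_le_length (by simp; omega),
      drop_drop]
    congr 2
    omega

lemma suff_replicate {n k : ℕ} (hk : n ≤ k) (a : A) : suff n (replicate k a) = replicate n a := by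
  simp only [suff, length_replicate, drop_replicate]
  congr 1
  omega

end Suffix

section NonEmitting

variable {A : Type*} (n : ℕ) (d : List A → A → ℝ) (lam : List A → ℝ)

@[simp]
lemma pe_nil_right (x : List A) : pe n d lam x [] = 1 := by
  cases x <;> simp [pe]

lemma pe_nil_cons (y : A) (w : List A) :
    pe n d lam [] (y :: w) = lam [] * d [] y * pe n d lam (suff n [y]) w := by
  simp [pe]

lemma pe_cons_cons (a : A) (x : List A) (y : A) (w : List A) :
    pe n d lam (a :: x) (y :: w) =
      lam (a :: x) * d (a :: x) y * pe n d lam (suff n (a :: x ++ [y])) w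
        + (1 - lam (a :: x)) * pe n d lam x (y :: w) := by
  simp [pe]

lemma pe_one_cons (x : List A) (y : A) (w : List A) :
    pe n d (fun _ => 1) x (y :: w) = d x y * pe n d (fun _ => 1) (suff n (x ++ [y])) w := by
  cases x <;> simp [pe]

end NonEmitting

section Interpolated

variable {A : Type*} (n : ℕ) (d : List A → A → ℝ) (lamI : ℕ → List A → ℝ)

lemma pc_cons (h : List A) (y : A) (w : List A) :
    pc n d lamI h (y :: w) = pcSym d lamI (suff n h) y * pc n d lamI (h ++ [y]) w := by
  simp [pc]

lemma pc_append_singleton (w h : List A) (y : A) :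
    pc n d lamI h (w ++ [y]) = pc n d lamI h w * pcSym d lamI (suff n (h ++ w)) y := by
  induction w generalizing h with
  | nil => simp [pc]
  | cons x w ih =>
    rw [cons_append, pc_cons, ih, pc_cons, append_assoc, singleton_append]
    ring

lemma pc_replicate_succ {k : ℕ} (hk : n ≤ k) (a : A) :
    pc n d lamI [] (replicate (k + 1) a) =
      pc n d lamI [] (replicate k a) * pcSym d lamI (replicate n a) a := by
  rw [replicate_succ', pc_append_singleton, nil_append, suff_replicate hk]

lemma pc_replicate_sq {k : ℕ} (hk : n ≤ k) (a : A) :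
    pc n d lamI [] (replicate (k + 1) a) ^ 2 =
      pc n d lamI [] (replicate k a) * pc n d lamI [] (replicate (k + 2) a) := by
  rw [pc_replicate_succ n d lamI (k := k + 1) (by omega), pc_replicate_succ n d lamI hk]
  ring

lemma pe_pcSym_one_eq_pc (w h : List A) :
    pe n (pcSym d lamI) (fun _ => 1) (suff n h) w = pc n d lamI h w := by
  induction w generalizing h with
  | nil => simp [pc]
  | cons y w ih => rw [pe_one_cons, suff_suff_append, ih, pc_cons]

lemma sum_pcSym [Fintype A] {c : List A} (hI : IsInterp n d lamI) (hc : c.length ≤ n) :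
    ∑ y, pcSym d lamI c y = 1 := by
  calc ∑ y, pcSym d lamI c y
      = ∑ i ∈ range (c.length + 1), lamI i c * ∑ y, d (suff i c) y := by
        simp only [pcSym, mul_sum]
        exact sum_comm
    _ = ∑ i ∈ range (c.length + 1), lamI i c := by
        refine sum_congr rfl fun i _ => ?_
        rw [(hI.1 _ ((suff_length_le i c).trans hc)).2, mul_one]
    _ = 1 := (hI.2 c hc).2

lemma IsInterp.isNonEmit_pcSym [Fintype A] (hI : IsInterp n d lamI) :
    IsNonEmit n (pcSym d lamI) (fun _ => 1) := by
  refine ⟨fun c hc => ⟨fun y => ?_, sum_pcSym n d lamI hI hc⟩,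
    fun _ _ => ⟨zero_le_one, le_rfl⟩, rfl⟩
  refine sum_nonneg fun i hi => mul_nonneg ?_ ?_
  · exact ((hI.2 c hc).1 i (mem_range_succ_iff.mp hi)).1
  · exact (hI.1 _ ((suff_length_le i c).trans hc)).1 y

lemma exists_isNonEmit_pe_eq_pc [Fintype A] (hI : IsInterp n d lamI) :
    ∃ (d' : List A → A → ℝ) (lam : List A → ℝ),
      IsNonEmit n d' lam ∧ ∀ x, pe n d' lam [] x = pc n d lamI [] x :=
  ⟨pcSym d lamI, fun _ => 1, hI.isNonEmit_pcSym, fun x => by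
    simpa [suff] using pe_pcSym_one_eq_pc n d lamI x []⟩

end Interpolated

section Witness

noncomputable def witnessD (c : List (Fin 2)) (y : Fin 2) : ℝ :=
  if c = [0] then (if y = 0 then 1 / 4 else 3 / 4) else 1 / 2

noncomputable def witnessLam (c : List (Fin 2)) : ℝ := if c = [0] then 1 / 2 else 1

lemma isNonEmit_witness : IsNonEmit 2 witnessD witnessLam := by
  refine ⟨fun c _ => ⟨fun y => ?_, ?_⟩, fun c _ => ?_, by simp [witnessLam]⟩
  · unfold witnessD
    split_ifs <;> norm_num
  · simp only [Fin.sum_univ_two, witnessD, one_ne_zero, if_true, if_false]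
    split_ifs <;> norm_num
  · unfold witnessLam
    split_ifs <;> norm_num

lemma pe_witness_zero_zero (k : ℕ) :
    pe 2 witnessD witnessLam [0, 0] (replicate k 0) = (1 / 2) ^ k := by
  induction k with
  | zero => simp
  | succ k ih =>
    rw [replicate_succ, pe_cons_cons, show suff 2 ([0, 0] ++ [(0 : Fin 2)]) = [0, 0] from rfl, ih]
    norm_num [witnessD, witnessLam, pow_succ']

lemma pe_witness_zero (k : ℕ) :
    pe 2 witnessD witnessLam [0] (replicate k 0) = ((1 / 2) ^ k + (1 / 4) ^ k) / 2 := by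
  induction k with
  | zero => norm_num
  | succ k ih =>
    rw [replicate_succ, pe_cons_cons, show suff 2 ([0] ++ [(0 : Fin 2)]) = [0, 0] from rfl,
      pe_witness_zero_zero, pe_nil_cons, show suff 2 [(0 : Fin 2)] = [0] from rfl, ih]
    norm_num [witnessD, witnessLam, pow_succ]
    ring

lemma pe_witness_nil (k : ℕ) :
    pe 2 witnessD witnessLam [] (replicate (k + 1) 0) = ((1 / 2) ^ k + (1 / 4) ^ k) / 4 := by
  rw [replicate_succ, pe_nil_cons, show suff 2 [(0 : Fin 2)] = [0] from rfl, pe_witness_zero]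
  norm_num [witnessD, witnessLam]
  ring

lemma pe_witness_sq_ne (n : ℕ) :
    pe 2 witnessD witnessLam [] (replicate (n + 2) 0) ^ 2 ≠
      pe 2 witnessD witnessLam [] (replicate (n + 1) 0) *
        pe 2 witnessD witnessLam [] (replicate (n + 3) 0) := by
  have hquarter (m : ℕ) : ((1 : ℝ) / 4) ^ m = ((1 / 2) ^ m) ^ 2 := by
    rw [← pow_mul, mul_comm, pow_mul]
    norm_num
  simp only [pe_witness_nil, hquarter, pow_succ]
  have hx : (0 : ℝ) < (1 / 2) ^ n := by positivity
  nlinarith [pow_pos hx 3]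

end Witness

/-- The class of non-emitting Markov models is strictly more powerful than
the class of interpolated Markov models over the binary alphabet: (i) every
order-`n` interpolated model is matched exactly by an order-`n` hierarchical
non-emitting model, and (ii) some order-2 hierarchical non-emitting model
disagrees with every interpolated model on the probability of some string. -/
theorem nonemitting_strictly_more_powerful_than_interpolated :
    (∀ (n : ℕ) (d : List (Fin 2) → Fin 2 → ℝ) (lamI : ℕ → List (Fin 2) → ℝ),
      IsInterp n d lamI →
      ∃ (d' : List (Fin 2) → Fin 2 → ℝ) (lam : List (Fin 2) → ℝ),
        IsNonEmit n d' lam ∧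
        ∀ x : List (Fin 2), pe n d' lam [] x = pc n d lamI [] x) ∧
    (∃ (d : List (Fin 2) → Fin 2 → ℝ) (lam : List (Fin 2) → ℝ),
      IsNonEmit 2 d lam ∧
      ∀ (n : ℕ) (d' : List (Fin 2) → Fin 2 → ℝ) (lamI' : ℕ → List (Fin 2) → ℝ),
        IsInterp n d' lamI' →
        ∃ x : List (Fin 2), pe 2 d lam [] x ≠ pc n d' lamI' [] x) := by
  refine ⟨fun n d lamI hI => exists_isNonEmit_pe_eq_pc n d lamI hI,
    witnessD, witnessLam, isNonEmit_witness, fun n d' lamI' _ => ?_⟩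
  by_contra! hagree
  apply pe_witness_sq_ne n
  simp only [hagree]
  exact pc_replicate_sq n d' lamI' (k := n + 1) (by omega) 0
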